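/- Let a = χ^S for S ⊆ E^n, and suppose there exists k such that the Fourier transform satisfies â(v) = 0 for every v ∈ E^n with wt(v) ∉ {0, k}. Then a is a perfect 2-coloring of E^n (i.e., there exists a matrix of parameters for which a is a perfect coloring). -/

import Mathlib

open Finset

/-- Weight of a vector in the Boolean cube: the number of ones. -/
def wt {n : ℕ} (y : Fin n → Bool) : ℕ := (Finset.univ.filter fun i => y i = true).card

/-- The face `E^n_y(z) = {x : [x,y] = [z,y]}`: all `x` agreeing with `z` on the
support of `y`. -/
def face {n : ℕ} (y z : Fin n → Bool) : Finset (Fin n → Bool) :=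
  Finset.univ.filter fun x => ∀ i, y i = true → x i = z i

/-- `χ^S` is correlation-immune of order `k`: all faces obtained by fixing `k`
coordinates (i.e. faces `E^n_y(z)` with `wt y = k`) intersect `S` in the same
cardinality. -/
def CorrImmune {n : ℕ} (S : Finset (Fin n → Bool)) (k : ℕ) : Prop :=
  ∀ y₁ z₁ y₂ z₂ : Fin n → Bool, wt y₁ = k → wt y₂ = k →
    (face y₁ z₁ ∩ S).card = (face y₂ z₂ ∩ S).card

/-- `cor S` : the maximum order of correlation immunity of `χ^S`. -/
noncomputable def cor {n : ℕ} (S : Finset (Fin n → Bool)) : ℕ :=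
  sSup {k | k ≤ n ∧ CorrImmune S k}

/-- Density `ρ(S) = |S| / 2^n`. -/
def rho {n : ℕ} (S : Finset (Fin n → Bool)) : ℚ := (S.card : ℚ) / 2 ^ n

/-- `nei S`: the average number of neighbors in `S` of vertices of `S`,
`(1/|S|) ∑_{x∈S} |B(x) ∩ S| - 1`, where `B x` is the Hamming ball of radius 1. -/
def nei {n : ℕ} (S : Finset (Fin n → Bool)) : ℚ :=
  (∑ x ∈ S, ((S.filter fun y => hammingDist x y ≤ 1).card : ℚ)) / (S.card : ℚ) - 1

/-- Characteristic function of `S`, as a rational-valued function. -/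
def chi {n : ℕ} (S : Finset (Fin n → Bool)) (x : Fin n → Bool) : ℚ := if x ∈ S then 1 else 0

/-- Characteristic function of `S` as a 2-coloring (color 1 = membership in `S`). -/
def chiCol {n : ℕ} (S : Finset (Fin n → Bool)) (x : Fin n → Bool) : Fin 2 :=
  if x ∈ S then 1 else 0

/-- `Col` is a perfect coloring with parameter matrix `A`: every vertex of color `i`
has exactly `A i j` neighbors (at Hamming distance 1) of color `j`. -/
def IsPerfectColoring {n : ℕ} (Col : (Fin n → Bool) → Fin 2) (A : Fin 2 → Fin 2 → ℕ) : Prop :=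
  ∀ x : Fin n → Bool, ∀ j : Fin 2,
    (Finset.univ.filter fun y => hammingDist x y = 1 ∧ Col y = j).card = A (Col x) j

/-- Fourier transform `â(v) = ∑_u a(u) (-1)^{⟨u,v⟩}`. -/
def fourierT {n : ℕ} (a : (Fin n → Bool) → ℚ) (v : Fin n → Bool) : ℚ :=
  ∑ u : Fin n → Bool, a u * (-1) ^ ((Finset.univ.filter fun i => u i = true ∧ v i = true).card)

/-- Coordinatewise XOR. -/
def xorv {n : ℕ} (u v : Fin n → Bool) : Fin n → Bool := fun i => xor (u i) (v i)

/-- Weight distribution `B_i(a) = (1/|S|) |{(u,v) ∈ S×S : wt(u⊕v) = i}|`. -/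
def Bdist {n : ℕ} (S : Finset (Fin n → Bool)) (i : ℕ) : ℚ :=
  (((S ×ˢ S).filter fun p => wt (xorv p.1 p.2) = i).card : ℚ) / (S.card : ℚ)

/-- Kravchuk polynomial `P_k(i) = ∑_{j=0}^k (-1)^j C(i,j) C(n-i,k-j)`. -/
def krav (n k i : ℕ) : ℚ :=
  ∑ j ∈ Finset.range (k + 1),
    (-1 : ℚ) ^ j * (Nat.choose i j : ℚ) * (Nat.choose (n - i) (k - j) : ℚ)

/-- MacWilliams transform `B'_k(a) = (1/|S|) ∑_{i=0}^n B_i(a) P_k(i)`. -/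
def Bmw {n : ℕ} (S : Finset (Fin n → Bool)) (k : ℕ) : ℚ :=
  (∑ i ∈ Finset.range (n + 1), Bdist S i * krav n k i) / (S.card : ℚ)

/-!
The neighbour-sum operator `(N a)(x) = ∑ᵢ a(x ⊕ eᵢ)` is diagonal in the Walsh basis: the
character `x ↦ (-1)^⟨x,v⟩` is an eigenvector with eigenvalue `n - 2 wt v`. If `â` is supported on
weights `0` and `k`, then `N a = (n - 2k) a + 2k â(0) / 2^n`, so the number of neighbours of `x`
in `S` is determined by whether `x ∈ S`. The same holds for the complement, since `1 - χ^S` has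
the same spectral support.
-/

def walsh {n : ℕ} (u v : Fin n → Bool) : ℚ := (-1) ^ #{i | u i = true ∧ v i = true}

def unitVec {n : ℕ} (i : Fin n) : Fin n → Bool := fun j => decide (j = i)

section Walsh

variable {n : ℕ}

lemma wt_eq_zero_iff (v : Fin n → Bool) : wt v = 0 ↔ v = fun _ => false := by
  simp [wt, filter_eq_empty_iff, funext_iff]

lemma fourierT_eq_sum_walsh (a : (Fin n → Bool) → ℚ) (v : Fin n → Bool) :
    fourierT a v = ∑ u, a u * walsh u v := rfl

lemma walsh_eq_prod (u v : Fin n → Bool) :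
    walsh u v = ∏ i, if u i = true ∧ v i = true then (-1 : ℚ) else 1 := by
  rw [prod_ite, prod_const, prod_const_one, mul_one]; rfl

lemma walsh_comm (u v : Fin n → Bool) : walsh u v = walsh v u := by
  simp only [walsh, and_comm]

lemma walsh_xorv_left (u w v : Fin n → Bool) :
    walsh (xorv u w) v = walsh u v * walsh w v := by
  simp only [walsh_eq_prod, ← prod_mul_distrib, xorv]
  refine prod_congr rfl fun i _ => ?_
  rcases Bool.eq_false_or_eq_true (u i) with hu | hu <;>
    rcases Bool.eq_false_or_eq_true (w i) with hw | hw <;>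
    rcases Bool.eq_false_or_eq_true (v i) with hv | hv <;> simp [hu, hw, hv]

lemma walsh_zero_right (u : Fin n → Bool) : walsh u (fun _ => false) = 1 := by
  simp [walsh]

lemma walsh_unitVec_left (i : Fin n) (v : Fin n → Bool) :
    walsh (unitVec i) v = if v i = true then -1 else 1 := by
  rw [walsh_eq_prod, prod_eq_single i]
  · simp [unitVec]
  · intro j _ hj; simp [unitVec, hj]
  · simp

lemma sum_walsh_right (u : Fin n → Bool) :
    ∑ v, walsh u v = if u = (fun _ => false) then (2 ^ n : ℚ) else 0 := by
  simp only [walsh_eq_prod]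
  rw [← Fintype.prod_sum (fun i b => if u i = true ∧ b = true then (-1 : ℚ) else 1)]
  split_ifs with hu
  · simp [hu]
  · obtain ⟨i, hi⟩ : ∃ i, u i = true := by
      by_contra! hc
      exact hu (funext fun i => by simpa using hc i)
    exact prod_eq_zero (mem_univ i) (by simp [hi])

lemma xorv_eq_false_iff (u x : Fin n → Bool) : xorv u x = (fun _ => false) ↔ u = x := by
  simp [funext_iff, xorv]

lemma sum_walsh_mul_walsh (u x : Fin n → Bool) :
    ∑ v, walsh u v * walsh x v = if u = x then (2 ^ n : ℚ) else 0 := by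
  simp only [← walsh_xorv_left, sum_walsh_right, xorv_eq_false_iff]

lemma sum_fourierT_mul_walsh (a : (Fin n → Bool) → ℚ) (x : Fin n → Bool) :
    ∑ v, fourierT a v * walsh x v = 2 ^ n * a x := by
  simp only [fourierT_eq_sum_walsh, sum_mul, mul_assoc]
  rw [sum_comm]
  simp only [← mul_sum, sum_walsh_mul_walsh, mul_ite, mul_zero, sum_ite_eq', mem_univ, if_true]
  ring

lemma fourierT_one_sub (a : (Fin n → Bool) → ℚ) {v : Fin n → Bool}
    (hv : v ≠ fun _ => false) : fourierT (fun u => 1 - a u) v = -fourierT a v := by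
  simp only [fourierT_eq_sum_walsh, sub_mul, one_mul, sum_sub_distrib]
  simp only [walsh_comm _ v, sum_walsh_right, if_neg hv]
  ring

end Walsh

section Neighbours

variable {n : ℕ}

lemma sum_walsh_unitVec_left (v : Fin n → Bool) :
    ∑ i, walsh (unitVec i) v = n - 2 * wt v := by
  simp only [walsh_unitVec_left, sum_ite, sum_const, nsmul_eq_mul, mul_neg, mul_one, wt]
  have hcard := card_filter_add_card_filter_not (s := univ) (p := fun i => v i = true)
  rw [card_univ, Fintype.card_fin, ← Nat.cast_inj (R := ℚ), Nat.cast_add] at hcard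
  rw [← hcard]; ring

lemma hammingDist_eq_one_iff (x y : Fin n → Bool) :
    hammingDist x y = 1 ↔ ∃ i, y = xorv x (unitVec i) := by
  simp only [hammingDist, card_eq_one, Finset.ext_iff, mem_filter, mem_univ, true_and,
    mem_singleton, funext_iff, xorv, unitVec]
  refine exists_congr fun i => forall_congr' fun j => ?_
  by_cases hj : j = i <;> cases x j <;> cases y j <;> simp [hj]

lemma xorv_unitVec_injective (x : Fin n → Bool) :
    Function.Injective fun i => xorv x (unitVec i) := by
  intro i j hij
  by_contra hne
  have := congrFun hij i
  simp [xorv, unitVec, hne] at this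

lemma filter_hammingDist_eq_one (x : Fin n → Bool) :
    ({y | hammingDist x y = 1} : Finset _) = univ.image fun i => xorv x (unitVec i) := by
  ext y
  simp only [mem_filter, mem_univ, true_and, mem_image, hammingDist_eq_one_iff]
  exact exists_congr fun _ => eq_comm

lemma card_filter_hammingDist_eq_one_and (x : Fin n → Bool) (p : (Fin n → Bool) → Prop)
    [DecidablePred p] :
    #{y | hammingDist x y = 1 ∧ p y} = #{i | p (xorv x (unitVec i))} := by
  rw [← filter_filter, filter_hammingDist_eq_one, filter_image,
    card_image_of_injective _ (xorv_unitVec_injective x)]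

end Neighbours

section Spectral

variable {n : ℕ}

lemma two_pow_mul_sum_xorv_unitVec (a : (Fin n → Bool) → ℚ) (x : Fin n → Bool) :
    2 ^ n * ∑ i, a (xorv x (unitVec i)) = ∑ v, fourierT a v * walsh x v * (n - 2 * wt v) := by
  simp only [mul_sum, ← sum_fourierT_mul_walsh, walsh_xorv_left, ← sum_walsh_unitVec_left]
  rw [sum_comm]
  exact sum_congr rfl fun v _ => sum_congr rfl fun i _ => by ring

lemma two_pow_mul_sum_xorv_unitVec_of_fourierT_eq_zero {a : (Fin n → Bool) → ℚ} {k : ℕ}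
    (ha : ∀ v, wt v ≠ 0 → wt v ≠ k → fourierT a v = 0) (x : Fin n → Bool) :
    2 ^ n * ∑ i, a (xorv x (unitVec i))
      = (n - 2 * k) * (2 ^ n * a x) + 2 * k * fourierT a (fun _ => false) := by
  have hsplit : ∀ v, fourierT a v * walsh x v * (n - 2 * wt v)
      = fourierT a v * walsh x v * (n - 2 * k) + fourierT a v * walsh x v * (2 * k - 2 * wt v) :=
    fun v => by ring
  rw [two_pow_mul_sum_xorv_unitVec, sum_congr rfl fun v _ => hsplit v, sum_add_distrib,
    ← sum_mul, sum_fourierT_mul_walsh, sum_eq_single (fun _ => false)]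
  · rw [walsh_zero_right, (wt_eq_zero_iff _).mpr rfl]
    ring
  · intro v _ hv
    by_cases hk : wt v = k
    · simp [hk]
    · simp [ha v (mt (wt_eq_zero_iff v).mp hv) hk]
  · simp

lemma sum_xorv_unitVec_eq_of_fourierT_eq_zero {a : (Fin n → Bool) → ℚ} {k : ℕ}
    (ha : ∀ v, wt v ≠ 0 → wt v ≠ k → fourierT a v = 0) {x x' : Fin n → Bool}
    (hx : a x = a x') :
    ∑ i, a (xorv x (unitVec i)) = ∑ i, a (xorv x' (unitVec i)) := by
  refine mul_left_cancel₀ (pow_ne_zero n two_ne_zero) ?_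
  rw [two_pow_mul_sum_xorv_unitVec_of_fourierT_eq_zero ha,
    two_pow_mul_sum_xorv_unitVec_of_fourierT_eq_zero ha, hx]

end Spectral

lemma exists_isPerfectColoring_of_card_eq {n : ℕ} (Col : (Fin n → Bool) → Fin 2)
    (hCol : ∀ x x' j, Col x = Col x' →
      #{y | hammingDist x y = 1 ∧ Col y = j} = #{y | hammingDist x' y = 1 ∧ Col y = j}) :
    ∃ A, IsPerfectColoring Col A := by
  refine ⟨fun i j => if hi : ∃ x, Col x = i then #{y | hammingDist hi.choose y = 1 ∧ Col y = j}
    else 0, fun x j => ?_⟩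
  have hx : ∃ x', Col x' = Col x := ⟨x, rfl⟩
  simp only [dif_pos hx]
  exact hCol _ _ j hx.choose_spec.symm

lemma fourierT_indicator_chiCol_eq_zero {n : ℕ} {S : Finset (Fin n → Bool)} {k : ℕ}
    (h : ∀ v, wt v ≠ 0 → wt v ≠ k → fourierT (chi S) v = 0) (j : Fin 2) :
    ∀ v, wt v ≠ 0 → wt v ≠ k → fourierT (fun y => if chiCol S y = j then 1 else 0) v = 0 := by
  intro v hv0 hvk
  obtain rfl | rfl : j = 0 ∨ j = 1 := by omega
  · have : (fun y => if chiCol S y = 0 then (1 : ℚ) else 0) = fun y => 1 - chi S y := by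
      funext y; by_cases hy : y ∈ S <;> simp [chiCol, chi, hy]
    rw [this, fourierT_one_sub _ (mt (wt_eq_zero_iff v).mpr hv0), h v hv0 hvk, neg_zero]
  · have : (fun y => if chiCol S y = 1 then (1 : ℚ) else 0) = chi S := by
      funext y; by_cases hy : y ∈ S <;> simp [chiCol, chi, hy]
    rw [this, h v hv0 hvk]

/-- If there is `k` such that `â(v) = 0` for every `v` with
`wt v ∉ {0, k}`, then `χ^S` is a perfect 2-coloring. -/
theorem stmt5 {n : ℕ} (S : Finset (Fin n → Bool)) (k : ℕ)
    (h : ∀ v : Fin n → Bool, wt v ≠ 0 → wt v ≠ k → fourierT (chi S) v = 0) :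
    ∃ A : Fin 2 → Fin 2 → ℕ, IsPerfectColoring (chiCol S) A := by
  refine exists_isPerfectColoring_of_card_eq _ fun x x' j hx => ?_
  have hcard : ∀ z, (#{y | hammingDist z y = 1 ∧ chiCol S y = j} : ℚ)
      = ∑ i, if chiCol S (xorv z (unitVec i)) = j then 1 else 0 := fun z => by
    rw [card_filter_hammingDist_eq_one_and, natCast_card_filter]
  exact_mod_cast (hcard x).trans <|
    (sum_xorv_unitVec_eq_of_fourierT_eq_zero (fourierT_indicator_chiCol_eq_zero h j)
      (by rw [hx])).trans (hcard x').symm
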